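/- Let f ∈ ℂ[x₀,…,x₄] be homogeneous of degree 3 whose partial derivatives have no common zero in ℂ⁵ other than the origin, and set v₁ = (∂f/∂x₁) ∂/∂x₀ − (∂f/∂x₀) ∂/∂x₁ + (∂f/∂x₃) ∂/∂x₂ − (∂f/∂x₂) ∂/∂x₃. Let ω be a polynomial 1-form on ℂ⁵ whose coefficients are homogeneous of degree 2 and which satisfies ι_𝓡 ω = 0. If ι_{v₁}(dω) = 0, then dω = 0 and consequently ω = 0. -/

import Mathlib

/-!
A linear syzygy `∑ᵢ Lᵢ ∂ᵢf = 0` among the partials of a form `f` of degree `d + 1 ≥ 3` is a linear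
vector field `x ↦ M x` killing `f`. Differentiating it, `-Mᵀ` acts on `∇f`; at an eigenvector
`M v = μ v` Euler's formula then gives `Mᵀ ∇f(v) = -d μ ∇f(v)` with `∇f(v) ≠ 0` by smoothness, so
the finite spectrum of `M` is stable under `μ ↦ -d μ` and `M` is nilpotent. If
`M ^ k ≠ 0 = M ^ (k + 1)`, then along the polynomial orbit `γ(t) = exp (t M) v` the gradient
`∇f(γ(t)) = exp (-t Mᵀ) ∇f(v)` has degree at most `k`, while its coefficient of `t ^ (d k)` is
`∇f(M ^ k v / k!)`; as `d k > k`, `∇f` vanishes at a nonzero point. So there are no linear syzygies.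

Each equation of `ι_{v₁} dω = 0` is such a syzygy, whose coefficients are entries of the rows
`0, …, 3` of `dω`; antisymmetry gives `dω = 0`. Then Cartan's formula
`ι_𝓡 dω + d ι_𝓡 ω = (n + 1) ω`, for coefficients of degree `n`, gives `ω = 0`.
-/

open MvPolynomial Finset Matrix
open scoped Nat Polynomial

theorem eq_zero_of_mul_mem_of_finite {M₀ : Type*} [MonoidWithZero M₀] [IsCancelMulZero M₀]
    {S : Set M₀} (hS : S.Finite) {c : M₀} (hc : Function.Injective (c ^ · : ℕ → M₀))
    (h : ∀ x ∈ S, c * x ∈ S) {x : M₀} (hx : x ∈ S) : x = 0 := by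
  by_contra hx0
  have hmem : ∀ k : ℕ, c ^ k * x ∈ S := by
    intro k
    induction k with
    | zero => simpa using hx
    | succ k ih => simpa [pow_succ', mul_assoc] using h _ ih
  exact Set.infinite_of_injective_forall_mem ((mul_left_injective₀ hx0).comp hc) hmem hS

theorem pow_right_injective_neg_natCast {K : Type*} [Field K] [CharZero K] {d : ℕ} (hd : 2 ≤ d) :
    Function.Injective ((-(d : K)) ^ · : ℕ → K) := by
  intro a b hab
  refine Int.pow_right_injective (a := -(d : ℤ)) (by simp; omega) (Int.cast_injective (α := K) ?_)
  push_cast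
  exact hab

namespace Matrix

variable {K n : Type*} [Field K] [Fintype n] [DecidableEq n]

theorem mem_spectrum_iff_exists_mulVec_eq_smul {A : Matrix n n K} {μ : K} :
    μ ∈ spectrum K A ↔ ∃ v ≠ 0, A *ᵥ v = μ • v := by
  rw [← spectrum_toLin', ← Module.End.hasEigenvalue_iff_mem_spectrum]
  constructor
  · intro h
    obtain ⟨v, hv⟩ := h.exists_hasEigenvector
    exact ⟨v, hv.2, by simpa using Module.End.mem_eigenspace_iff.mp hv.1⟩
  · rintro ⟨v, hv, hAv⟩
    exact Module.End.hasEigenvalue_of_hasEigenvector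
      ⟨Module.End.mem_eigenspace_iff.mpr (by simpa using hAv), hv⟩

theorem spectrum_transpose (A : Matrix n n K) : spectrum K Aᵀ = spectrum K A := by
  ext μ
  simp only [mem_spectrum_iff_isRoot_charpoly, charpoly_transpose]

theorem isNilpotent_of_spectrum_subset_zero [IsAlgClosed K] {A : Matrix n n K}
    (h : spectrum K A ⊆ {0}) : IsNilpotent A := by
  have hsplit : A.charpoly.Splits := IsAlgClosed.splits _
  have hroots : A.charpoly.roots = Multiset.replicate (Fintype.card n) 0 := by
    rw [Multiset.eq_replicate, ← hsplit.natDegree_eq_card_roots, charpoly_natDegree_eq_dim]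
    exact ⟨rfl, fun μ hμ =>
      h (mem_spectrum_iff_isRoot_charpoly.mpr (Polynomial.isRoot_of_mem_roots hμ))⟩
  have hchar : A.charpoly = Polynomial.X ^ Fintype.card n := by
    rw [hsplit.eq_prod_roots_of_monic A.charpoly_monic, hroots]
    simp
  refine ⟨Fintype.card n, ?_⟩
  simpa [hchar] using A.aeval_self_charpoly

end Matrix

namespace MvPolynomial

section CommSemiring

variable {R σ : Type*} [CommSemiring R] [Fintype σ]

theorem derivative_aeval (γ : σ → R[X]) (p : MvPolynomial σ R) :
    Polynomial.derivative (aeval γ p) =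
      ∑ i, aeval γ (pderiv i p) * Polynomial.derivative (γ i) := by
  classical
  induction p using MvPolynomial.induction_on with
  | C a => simp
  | add p q hp hq => simp only [map_add, hp, hq, add_mul, sum_add_distrib]
  | mul_X p i hp =>
    have hX : ∀ j, aeval γ (pderiv j (X i : MvPolynomial σ R)) = if j = i then 1 else 0 := by
      intro j
      rcases eq_or_ne j i with rfl | hji
      · simp
      · simp [pderiv_X_of_ne (Ne.symm hji), hji]
    simp only [map_mul, aeval_X, Polynomial.derivative_mul, hp, pderiv_mul, map_add, hX, add_mul,
      sum_add_distrib, sum_mul, mul_ite, mul_one, mul_zero, ite_mul, zero_mul, sum_ite_eq',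
      mem_univ, if_true]
    exact congrArg (· + _) (sum_congr rfl fun j _ => by ring)

theorem coeff_aeval_of_isHomogeneous {γ : σ → R[X]} {k : ℕ}
    (hγ : ∀ i, (γ i).natDegree ≤ k) {p : MvPolynomial σ R} {d : ℕ} (hp : p.IsHomogeneous d) :
    (aeval γ p).coeff (d * k) = eval (fun i => (γ i).coeff k) p := by
  classical
  conv_lhs => rw [p.as_sum]
  conv_rhs => rw [p.as_sum]
  rw [map_sum, map_sum, Polynomial.finsetSum_coeff]
  refine sum_congr rfl fun m hm => ?_
  have hmd : Multiset.card m.toMultiset = d := by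
    simpa [Finsupp.weight_apply, Finsupp.sum] using hp (mem_support_iff.mp hm)
  have hprod : ∀ (S : Type _) [CommSemiring S] (g : σ → S),
      (m.prod fun i e => g i ^ e) = (m.toMultiset.map g).prod := by
    intro S _ g
    simp [Finsupp.toMultiset_map, Finsupp.prod_mapDomain_index, pow_add]
  rw [aeval_monomial, eval_monomial, hprod, hprod, Polynomial.algebraMap_eq,
    Polynomial.coeff_C_mul, ← hmd, ← Multiset.card_map γ,
    Polynomial.coeff_multiset_prod_of_natDegree_le, Multiset.map_map]
  · rfl
  · simpa using fun i _ => hγ i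

end CommSemiring

section CommRing

variable {R σ : Type*} [CommRing R]

theorem pderiv_pderiv_comm (i j : σ) (p : MvPolynomial σ R) :
    pderiv i (pderiv j p) = pderiv j (pderiv i p) := by
  classical
  rw [← sub_eq_zero, ← Derivation.commutator_apply]
  suffices ⁅pderiv i, pderiv j⁆ = (0 : Derivation R (MvPolynomial σ R) (MvPolynomial σ R)) by
    rw [this, Derivation.zero_apply]
  refine derivation_ext fun k => ?_
  simp [Derivation.commutator_apply, pderiv_X, Pi.single_apply, apply_ite]

variable [Fintype σ]

theorem sum_X_mul_pderiv_sub_pderiv {A : σ → MvPolynomial σ R} {n : ℕ}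
    (hA : ∀ i, (A i).IsHomogeneous n) (hrad : ∑ i, X i * A i = 0) (j : σ) :
    ∑ i, X i * (pderiv i (A j) - pderiv j (A i)) = (n + 1) • A j := by
  classical
  have hd : pderiv j (∑ i, X i * A i) = A j + ∑ i, X i * pderiv j (A i) := by
    simp [pderiv_X, Pi.single_apply, sum_add_distrib, add_comm]
  rw [hrad, map_zero] at hd
  simp only [mul_sub, sum_sub_distrib, (hA j).sum_X_mul_pderiv]
  linear_combination hd

theorem eq_zero_of_pderiv_sub_pderiv_eq_zero [IsDomain R] [CharZero R] {A : σ → MvPolynomial σ R}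
    {n : ℕ} (hA : ∀ i, (A i).IsHomogeneous n) (hrad : ∑ i, X i * A i = 0)
    (hclosed : ∀ i j, pderiv i (A j) - pderiv j (A i) = 0) (j : σ) : A j = 0 := by
  have h := sum_X_mul_pderiv_sub_pderiv hA hrad j
  simp only [hclosed, mul_zero, sum_const_zero] at h
  exact (smul_eq_zero.mp h.symm).resolve_left n.succ_ne_zero

end CommRing

end MvPolynomial

section PolynomialOrbit

open Polynomial

variable {K σ : Type*} [Field K] [Fintype σ]

theorem Polynomial.derivative_mulVec_map_C (A : Matrix σ σ K) (u : σ → K[X]) (i : σ) :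
    derivative ((A.map C *ᵥ u) i) = (A.map C *ᵥ fun j => derivative (u j)) i := by
  simp [Matrix.mulVec, dotProduct]

theorem Polynomial.iterate_derivative_eq_mulVec [DecidableEq σ] {B : Matrix σ σ K} {u : σ → K[X]}
    (hu : ∀ j, derivative (u j) = (B.map C *ᵥ u) j) (m : ℕ) (j : σ) :
    derivative^[m] (u j) = ((B ^ m).map C *ᵥ u) j := by
  induction m generalizing j with
  | zero => simp [Matrix.map_one]
  | succ m ih =>
    rw [Function.iterate_succ_apply', ih, derivative_mulVec_map_C, _root_.funext hu,
      mulVec_mulVec, ← Matrix.map_mul, ← pow_succ]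

theorem Polynomial.coeff_eq_zero_of_derivative_eq_mulVec [DecidableEq σ] [CharZero K]
    {B : Matrix σ σ K} {u : σ → K[X]} (hu : ∀ j, derivative (u j) = (B.map C *ᵥ u) j) {m : ℕ}
    (hB : B ^ m = 0)
    {n : ℕ} (hn : m ≤ n) (j : σ) : (u j).coeff n = 0 := by
  have h := coeff_iterate_derivative (k := m) (u j) (n - m)
  rw [iterate_derivative_eq_mulVec hu, hB, Nat.sub_add_cancel hn] at h
  simpa [Nat.descFactorial_eq_zero_iff_lt, not_lt.mpr hn] using h.symm

namespace Matrix

variable [DecidableEq σ]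

/-- For `A ^ N = 0` this is the orbit `t ↦ exp (t • A) v`. -/
noncomputable def expOrbit (A : Matrix σ σ K) (N : ℕ) (v : σ → K) (i : σ) : K[X] :=
  ∑ j ∈ range N, Polynomial.C ((A ^ j *ᵥ v) i / j !) * Polynomial.X ^ j

variable {A : Matrix σ σ K} {N : ℕ} (v : σ → K)

theorem coeff_expOrbit (hN : A ^ N = 0) (i : σ) (n : ℕ) :
    (expOrbit A N v i).coeff n = (A ^ n *ᵥ v) i / n ! := by
  simp only [expOrbit, finsetSum_coeff, coeff_C_mul_X_pow, sum_ite_eq, mem_range]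
  split_ifs with hn
  · rfl
  · rw [pow_eq_zero_of_le (not_lt.mp hn) hN]
    simp

theorem natDegree_expOrbit_le {k : ℕ} (hk : A ^ (k + 1) = 0) (i : σ) :
    (expOrbit A (k + 1) v i).natDegree ≤ k := by
  rw [natDegree_le_iff_coeff_eq_zero]
  intro n hn
  rw [coeff_expOrbit v hk, pow_eq_zero_of_le (by exact_mod_cast hn) hk]
  simp

theorem derivative_expOrbit [CharZero K] (hN : A ^ N = 0) (i : σ) :
    derivative (expOrbit A N v i) = (A.map Polynomial.C *ᵥ expOrbit A N v) i := by
  ext n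
  have hcoeff : ((A.map Polynomial.C *ᵥ expOrbit A N v) i).coeff n =
      (A ^ (n + 1) *ᵥ v) i / n ! := by
    rw [pow_succ', ← mulVec_mulVec]
    simp only [mulVec, dotProduct, map_apply, finsetSum_coeff, Polynomial.coeff_C_mul,
      coeff_expOrbit v hN, sum_div, mul_div_assoc]
  rw [coeff_derivative, coeff_expOrbit v hN, hcoeff, Nat.factorial_succ]
  push_cast
  field_simp

end Matrix

end PolynomialOrbit

namespace MvPolynomial

variable {K σ : Type*} [Field K] [Fintype σ]

theorem pderiv_mulVec_map_C_X (M : Matrix σ σ K) (i j : σ) :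
    pderiv j ((M.map C *ᵥ X) i) = C (M i j) := by
  classical
  simp [mulVec, dotProduct, pderiv_X, Pi.single_apply]

theorem eval_mulVec_map_C_X (M : Matrix σ σ K) (v : σ → K) (i : σ) :
    eval v ((M.map C *ᵥ X) i) = (M *ᵥ v) i := by
  simp [mulVec, dotProduct]

theorem aeval_mulVec_map_C_X (M : Matrix σ σ K) (γ : σ → K[X]) (i : σ) :
    aeval γ ((M.map C *ᵥ X) i) = (M.map Polynomial.C *ᵥ γ) i := by
  simp [mulVec, dotProduct, Polynomial.algebraMap_eq]

end MvPolynomial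

namespace Matrix

variable {K σ : Type*} [Field K] [Fintype σ]

/-- The infinitesimal form of `f ∘ exp (t • M) = f`. -/
def IsInfinitesimalSymmetry (M : Matrix σ σ K) (f : MvPolynomial σ K) : Prop :=
  ∑ i, (M.map C *ᵥ X) i * pderiv i f = 0

namespace IsInfinitesimalSymmetry

variable {f : MvPolynomial σ K} {M : Matrix σ σ K}

theorem sum_mulVec_map_C_X_mul_pderiv_pderiv (hM : M.IsInfinitesimalSymmetry f) (j : σ) :
    ∑ i, (M.map C *ᵥ X) i * pderiv i (pderiv j f) = -((M.map C)ᵀ *ᵥ fun i => pderiv i f) j := by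
  have h := congrArg (pderiv j) hM
  simp only [map_sum, map_zero, pderiv_mul, pderiv_mulVec_map_C_X, sum_add_distrib,
    pderiv_pderiv_comm j] at h
  rw [eq_neg_iff_add_eq_zero, add_comm, ← h]
  simp [mulVec, dotProduct]

variable [DecidableEq σ]

theorem neg_natCast_mul_mem_spectrum (hM : M.IsInfinitesimalSymmetry f) {d : ℕ}
    (hf : f.IsHomogeneous (d + 1)) (hsm : ∀ a : σ → K, a ≠ 0 → ∃ i, eval a (pderiv i f) ≠ 0)
    {μ : K} (hμ : μ ∈ spectrum K M) : -(d : K) * μ ∈ spectrum K M := by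
  obtain ⟨v, hv, hMv⟩ := mem_spectrum_iff_exists_mulVec_eq_smul.mp hμ
  have hq : (fun i => eval v (pderiv i f)) ≠ 0 := fun h => by
    obtain ⟨i, hi⟩ := hsm v hv
    exact hi (congrFun h i)
  rw [← spectrum_transpose]
  refine mem_spectrum_iff_exists_mulVec_eq_smul.mpr ⟨_, hq, funext fun j => ?_⟩
  have heuler := congrArg (eval v) (hf.pderiv (i := j)).sum_X_mul_pderiv
  have h := congrArg (eval v) (hM.sum_mulVec_map_C_X_mul_pderiv_pderiv j)
  simp only [map_sum, map_mul, map_neg, eval_mulVec_map_C_X, hMv, eval_X, map_nsmul,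
    Nat.add_sub_cancel] at h heuler
  simp only [Pi.smul_apply, smul_eq_mul, mul_assoc, ← mul_sum, heuler, RingHom.map_mulVec] at h
  simp only [nsmul_eq_mul, mulVec, dotProduct, map_apply, transpose_apply, eval_C,
    Function.comp_apply, Pi.smul_apply, smul_eq_mul] at h ⊢
  linear_combination h

theorem isNilpotent [CharZero K] [IsAlgClosed K] (hM : M.IsInfinitesimalSymmetry f) {d : ℕ}
    (hd : 2 ≤ d) (hf : f.IsHomogeneous (d + 1))
    (hsm : ∀ a : σ → K, a ≠ 0 → ∃ i, eval a (pderiv i f) ≠ 0) : IsNilpotent M :=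
  isNilpotent_of_spectrum_subset_zero fun _ hμ =>
    eq_zero_of_mul_mem_of_finite M.finite_spectrum (pow_right_injective_neg_natCast hd)
      (fun _ => hM.neg_natCast_mul_mem_spectrum hf hsm) hμ

theorem eval_pderiv_eq_zero [CharZero K] (hM : M.IsInfinitesimalSymmetry f) {d k : ℕ}
    (hd : 2 ≤ d) (hk : 1 ≤ k) (hf : f.IsHomogeneous (d + 1)) (hMk : M ^ (k + 1) = 0)
    (v : σ → K) (j : σ) : eval (fun i => (M ^ k *ᵥ v) i / k !) (pderiv j f) = 0 := by
  have hu : ∀ j, Polynomial.derivative (aeval (expOrbit M (k + 1) v) (pderiv j f)) =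
      ((-Mᵀ).map Polynomial.C *ᵥ fun i => aeval (expOrbit M (k + 1) v) (pderiv i f)) j := by
    intro j
    have h := congrArg (aeval (expOrbit M (k + 1) v)) (hM.sum_mulVec_map_C_X_mul_pderiv_pderiv j)
    simp only [map_sum, map_mul, map_neg, aeval_mulVec_map_C_X, ← derivative_expOrbit v hMk] at h
    rw [derivative_aeval]
    simp_rw [mul_comm (aeval _ _)]
    rw [h]
    simp [mulVec, dotProduct]
  have hnil : (-Mᵀ) ^ (k + 1) = 0 := by
    rw [neg_pow, ← transpose_pow, hMk, transpose_zero, mul_zero]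
  have htop := coeff_aeval_of_isHomogeneous (natDegree_expOrbit_le v hMk) (hf.pderiv (i := j))
  simp only [coeff_expOrbit v hMk, Nat.add_sub_cancel] at htop
  rw [← htop]
  exact Polynomial.coeff_eq_zero_of_derivative_eq_mulVec hu hnil (by nlinarith) j

theorem eq_zero [CharZero K] [IsAlgClosed K] (hM : M.IsInfinitesimalSymmetry f) {d : ℕ}
    (hd : 2 ≤ d) (hf : f.IsHomogeneous (d + 1))
    (hsm : ∀ a : σ → K, a ≠ 0 → ∃ i, eval a (pderiv i f) ≠ 0) : M = 0 := by
  have hnil := hM.isNilpotent hd hf hsm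
  by_contra hM0
  have : Nontrivial (Matrix σ σ K) := nontrivial_of_ne M 0 hM0
  obtain ⟨k, hk, hMk, hMk1⟩ : ∃ k, 1 ≤ k ∧ M ^ k ≠ 0 ∧ M ^ (k + 1) = 0 := by
    have h0 : 0 < nilpotencyClass M := pos_nilpotencyClass_iff.mpr hnil
    have h1 : nilpotencyClass M ≠ 1 := fun h => hM0 (eq_zero_of_nilpotencyClass_eq_one h)
    refine ⟨nilpotencyClass M - 1, by omega, pow_pred_nilpotencyClass hnil, ?_⟩
    rw [Nat.sub_add_cancel h0, pow_nilpotencyClass hnil]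
  obtain ⟨v, hv⟩ : ∃ v, M ^ k *ᵥ v ≠ 0 := by
    by_contra! h
    exact hMk (ext_of_mulVec_single fun i => by rw [h, zero_mulVec])
  obtain ⟨j, hj⟩ := hsm (fun i => (M ^ k *ᵥ v) i / k !) fun h =>
    hv (funext fun i => by simpa [Nat.factorial_ne_zero] using congrFun h i)
  exact hj (hM.eval_pderiv_eq_zero hd hk hf hMk1 v j)

end IsInfinitesimalSymmetry

end Matrix

theorem MvPolynomial.eq_zero_of_sum_mul_pderiv_eq_zero {K σ : Type*} [Field K] [CharZero K]
    [IsAlgClosed K] [Fintype σ] [DecidableEq σ] {f : MvPolynomial σ K} {d : ℕ} (hd : 2 ≤ d)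
    (hf : f.IsHomogeneous (d + 1)) (hsm : ∀ a : σ → K, a ≠ 0 → ∃ i, eval a (pderiv i f) ≠ 0)
    {L : σ → MvPolynomial σ K} (hL : ∀ i, (L i).IsHomogeneous 1)
    (hsyz : ∑ i, L i * pderiv i f = 0) : L = 0 := by
  have hspan : ∀ i, ∃ c : σ → K, ∑ k, c k • X k = L i := fun i =>
    (Submodule.mem_span_range_iff_exists_fun K).mp <| homogeneousSubmodule_one_eq_span_X (R := K) ▸
      (mem_homogeneousSubmodule 1 _).mpr (hL i)
  choose c hc using hspan
  have hLM : L = (Matrix.of c).map C *ᵥ X := by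
    funext i
    simp [← hc i, mulVec, dotProduct, smul_eq_C_mul]
  rw [hLM] at hsyz ⊢
  rw [IsInfinitesimalSymmetry.eq_zero hsyz hd hf hsm]
  simp

/-- Case 1 in the proof of Theorem 5.4.  Let `f ∈ ℂ[x₀,…,x₄]` be
homogeneous of degree 3 whose partial derivatives have no common zero other than the origin,
and let `v₁ = f_{x₁}∂₀ − f_{x₀}∂₁ + f_{x₃}∂₂ − f_{x₂}∂₃`.  Let `ω = Σᵢ Aᵢ dxᵢ` be a
polynomial 1-form with homogeneous degree-2 coefficients and `ι_𝓡 ω = 0`.  If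
`ι_{v₁}(dω) = 0` — in coefficients, `Σᵢ v₁ᵢ (∂ᵢA_j − ∂_jAᵢ) = 0` for every `j` — then
`dω = 0` and consequently `ω = 0`. -/
theorem case1_contraction_v1_kills_omega (f : MvPolynomial (Fin 5) ℂ)
    (hf : f.IsHomogeneous 3)
    (hsm : ∀ a : Fin 5 → ℂ, a ≠ 0 → ∃ i, eval a (pderiv i f) ≠ 0)
    (A : Fin 5 → MvPolynomial (Fin 5) ℂ)
    (hA : ∀ i, (A i).IsHomogeneous 2)
    (hrad : ∑ i, X i * A i = 0)
    (hcontr : ∀ j : Fin 5,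
      ∑ i, (![pderiv 1 f, -(pderiv 0 f), pderiv 3 f, -(pderiv 2 f), 0] : Fin 5 → _) i
        * (pderiv i (A j) - pderiv j (A i)) = 0) :
    (∀ i j : Fin 5, pderiv i (A j) - pderiv j (A i) = 0) ∧ (∀ i, A i = 0) := by
  set B : Fin 5 → Fin 5 → MvPolynomial (Fin 5) ℂ := fun i j => pderiv i (A j) - pderiv j (A i)
  have hB : ∀ i j, (B i j).IsHomogeneous 1 := fun i j => (hA j).pderiv.sub (hA i).pderiv
  have hB_row : ∀ i j, i ≠ 4 → B i j = 0 := by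
    intro i j hi
    have hL := congrFun (eq_zero_of_sum_mul_pderiv_eq_zero (d := 2) le_rfl hf hsm
      (L := ![-B 1 j, B 0 j, -B 3 j, B 2 j, 0])
      (fun k => by fin_cases k <;> simp [(hB _ _).neg, hB, isHomogeneous_zero])
      (by
        have h := hcontr j
        simp only [Fin.sum_univ_five, Fin.isValue, cons_val_zero, cons_val_one, neg_mul,
          Matrix.cons_val, zero_mul, add_zero] at h ⊢
        linear_combination h))
    fin_cases i
    · simpa using hL 1
    · simpa using hL 0
    · simpa using hL 3
    · simpa using hL 2
    · exact absurd rfl hi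
  have hclosed : ∀ i j, B i j = 0 := by
    intro i j
    by_cases hi : i = 4
    · by_cases hj : j = 4
      · simp [B, hi, hj]
      · rw [show B i j = -B j i from (neg_sub _ _).symm, hB_row j i hj, neg_zero]
    · exact hB_row i j hi
  exact ⟨hclosed, eq_zero_of_pderiv_sub_pderiv_eq_zero hA hrad hclosed⟩
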